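/- Let D be an integral domain with quotient field K, A a D-torsion-free D-algebra, and a ∈ A such that there exists a D-algebra homomorphism φ : Int(D) → A with φ(X) = a. Then the image of φ is a WPC D-subalgebra of A, and in particular f(a) ∈ A and g(f(a)) ∈ A for all f, g ∈ Int(D). -/

import Mathlib

set_option linter.unusedSectionVars false
open Polynomial TensorProduct

variable (D K : Type*) [CommRing D] [IsDomain D] [Field K] [Algebra D K] [IsFractionRing D K]

/-- The ring of integer-valued polynomials `Int(D) ⊆ K[X]`. -/
noncomputable def IntD : Subalgebra D (Polynomial K) :=
  ⨅ a : D, Subalgebra.comap ((Polynomial.aeval (algebraMap D K a)).restrictScalars D)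
    (Algebra.ofId D K).range

theorem mem_IntD {f : Polynomial K} :
    f ∈ IntD D K ↔
      ∀ a : D, ∃ d : D, algebraMap D K d = Polynomial.eval (algebraMap D K a) f := by
  simp [IntD, Algebra.mem_iInf, Subalgebra.mem_comap, Algebra.ofId_apply, Algebra.mem_bot,
    Set.mem_range]

/-- `X` as an element of `Int(D)`. -/
noncomputable def Xint : IntD D K := ⟨Polynomial.X, (mem_IntD D K).mpr fun a => ⟨a, by simp⟩⟩

/-- A `D`-subalgebra `S` of a `D`-torsion-free `D`-algebra `A` is WPC if `f(S) ⊆ S`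
for every integer-valued polynomial `f`, evaluation taking place in `K ⊗[D] A`. -/
def WPCsubA (A : Type*) [CommRing A] [Algebra D A] (S : Subalgebra D A) : Prop :=
  ∀ f ∈ IntD D K, ∀ b ∈ S, ∃ c ∈ S,
    Polynomial.aeval ((1 : K) ⊗ₜ[D] b) f = (1 : K) ⊗ₜ[D] c

/-! Clearing denominators, every `f ∈ Int(D)` has a multiple `d • f`, `d ≠ 0`, which is a
`D`-polynomial in `X`. Hence, after extending scalars to `K`, a `D`-algebra map `φ` out of `Int(D)`
is determined by `φ X = a`, namely `1 ⊗ φ f = f (1 ⊗ a)`. As `Int(D)` is closed under composition,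
`f (φ g) = φ (f ∘ g)` lies in the image of `φ`. -/

theorem comp_mem_IntD {f g : K[X]} (hf : f ∈ IntD D K) (hg : g ∈ IntD D K) :
    f.comp g ∈ IntD D K := by
  rw [mem_IntD] at *
  intro a
  obtain ⟨d₁, hd₁⟩ := hg a
  obtain ⟨d₂, hd₂⟩ := hf d₁
  exact ⟨d₂, by rw [Polynomial.eval_comp, ← hd₁, hd₂]⟩

theorem aeval_Xint (p : D[X]) :
    (Polynomial.aeval (Xint D K) p : K[X]) = p.map (algebraMap D K) := by
  change (IntD D K).val _ = _
  rw [← Polynomial.aeval_algHom_apply, ← Polynomial.aeval_map_algebraMap K,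
    Subalgebra.coe_val, Xint, Polynomial.aeval_X_left_apply]

theorem exists_smul_eq_aeval_Xint (f : IntD D K) :
    ∃ d ∈ nonZeroDivisors D, ∃ p : D[X], d • f = Polynomial.aeval (Xint D K) p := by
  obtain ⟨d, hd, hp⟩ :=
    IsLocalization.integerNormalization_spec (nonZeroDivisors D) (f : K[X])
  refine ⟨d, hd, IsLocalization.integerNormalization (nonZeroDivisors D) (f : K[X]),
    Subtype.ext ?_⟩
  rw [aeval_Xint, hp]
  rfl

/-- Cancelling the nonzero `d` is possible because `B` is a `K`-vector space. -/
theorem IntD_algHom_ext {B : Type*} [Ring B] [Algebra K B] [Algebra D B] [IsScalarTower D K B]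
    {ψ₁ ψ₂ : IntD D K →ₐ[D] B} (h : ψ₁ (Xint D K) = ψ₂ (Xint D K)) : ψ₁ = ψ₂ := by
  ext f
  obtain ⟨d, hd, p, hdf⟩ := exists_smul_eq_aeval_Xint D K f
  have hd₀ : algebraMap D K d ≠ 0 :=
    IsFractionRing.to_map_ne_zero_of_mem_nonZeroDivisors hd
  have hsmul : d • ψ₁ f = d • ψ₂ f := by
    rw [← map_smul, ← map_smul, hdf, ← Polynomial.aeval_algHom_apply,
      ← Polynomial.aeval_algHom_apply, h]
  rw [← algebraMap_smul K d (ψ₁ f), ← algebraMap_smul K d (ψ₂ f)] at hsmul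
  exact smul_right_injective B hd₀ hsmul

theorem tmul_algHom_eq_aeval {A : Type*} [CommRing A] [Algebra D A]
    (φ : IntD D K →ₐ[D] A) (f : IntD D K) :
    (1 : K) ⊗ₜ[D] φ f = Polynomial.aeval ((1 : K) ⊗ₜ[D] φ (Xint D K)) (f : K[X]) := by
  let evalAtX : IntD D K →ₐ[D] K ⊗[D] A :=
    ((Polynomial.aeval ((1 : K) ⊗ₜ[D] φ (Xint D K))).restrictScalars D).comp (IntD D K).val
  have hext : (Algebra.TensorProduct.includeRight.comp φ : IntD D K →ₐ[D] K ⊗[D] A) = evalAtX :=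
    IntD_algHom_ext D K (by simp [evalAtX, Xint])
  exact congrArg (fun ψ : IntD D K →ₐ[D] K ⊗[D] A => ψ f) hext

theorem stmt_10 (A : Type*) [CommRing A] [Algebra D A] (a : A)
    (φ : IntD D K →ₐ[D] A) (hφ : φ (Xint D K) = a) :
    WPCsubA D K A φ.range ∧
      ∀ f ∈ IntD D K, ∀ g ∈ IntD D K, ∃ b c : A,
        (1 : K) ⊗ₜ[D] b = Polynomial.aeval ((1 : K) ⊗ₜ[D] a) f ∧
        (1 : K) ⊗ₜ[D] c = Polynomial.aeval ((1 : K) ⊗ₜ[D] b) g := by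
  subst hφ
  have hφf := tmul_algHom_eq_aeval D K φ
  constructor
  · rintro f hf _ ⟨g, rfl⟩
    refine ⟨φ ⟨f.comp g, comp_mem_IntD D K hf g.2⟩, ⟨_, rfl⟩, ?_⟩
    rw [hφf, Polynomial.aeval_comp, ← hφf g]
    rfl
  · intro f hf g hg
    refine ⟨φ ⟨f, hf⟩, φ ⟨g.comp f, comp_mem_IntD D K hg hf⟩, hφf ⟨f, hf⟩, ?_⟩
    rw [hφf, hφf ⟨f, hf⟩, Polynomial.aeval_comp]
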